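/- arXiv:1008.1668 — 6 statements merged into one kernel-verified Lean document; each statement's English description precedes it below -/
import Mathlib

section
/- For the ℓ-bonacci system (U_{n+ℓ} = U_{n+ℓ−1} + ⋯ + U_n, U_i = 2^i for i < ℓ), the ℓ×ℓ Hankel matrix H_ℓ = (U_{i+j})_{0≤i,j≤ℓ−1} has determinant ±1. -/
theorem lbonacci_hankel_det
    (ℓ : ℕ) (hℓ : 2 ≤ ℓ) (U : ℕ → ℤ)
    (hinit : ∀ i < ℓ, U i = 2 ^ i)
    (hrec : ∀ n, U (n + ℓ) = ∑ i ∈ Finset.range ℓ, U (n + i)) :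
    (Matrix.of fun i j : Fin ℓ => U (i.1 + j.1)).det = 1 ∨
    (Matrix.of fun i j : Fin ℓ => U (i.1 + j.1)).det = -1 := by
  obtain ⟨m, rfl⟩ : ∃ m, ℓ = m + 1 := ⟨ℓ - 1, by omega⟩
  have hm : 1 ≤ m := by omega
  -- basic values
  have hUval : ∀ i, i ≤ m → U i = 2 ^ i := fun i hi => hinit i (by omega)
  have hV0 : ∀ n, n < m → U (n + 1) - 2 * U n = 0 := by
    intro n hn
    rw [hUval n (by omega), hUval (n+1) (by omega), pow_succ]
    ring
  have hUl : U (m + 1) = 2 ^ (m + 1) - 1 := by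
    have h := hrec 0
    simp only [zero_add] at h
    rw [h]
    have : ∀ i ∈ Finset.range (m+1), U i = 2 ^ i := fun i hi =>
      hUval i (by simpa using Nat.lt_succ_iff.mp (Finset.mem_range.mp hi))
    rw [Finset.sum_congr rfl this]
    have := geom_sum_mul (2 : ℤ) (m+1)
    simpa using this
  have hVm : U (m + 1) - 2 * U m = -1 := by
    rw [hUl, hUval m le_rfl, pow_succ]
    ring
  set A : Matrix (Fin (m+1)) (Fin (m+1)) ℤ :=
    Matrix.of fun i j : Fin (m+1) => U (i.1 + j.1) with hA
  set B : Matrix (Fin (m+1)) (Fin (m+1)) ℤ :=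
    Matrix.of (fun i j : Fin (m+1) =>
      if (i : ℕ) = 0 then U j.1 else U (i.1 + j.1) - 2 * U (i.1 + j.1 - 1)) with hB
  have hAB : A.det = B.det := by
    apply Matrix.det_eq_of_forall_row_eq_smul_add_pred (fun _ => 2)
    · intro j
      simp [hA, hB]
    · intro i j
      have h1 : (i.succ : ℕ) = i.1 + 1 := rfl
      have h2 : (i.castSucc : ℕ) = i.1 := rfl
      simp only [hA, hB, Matrix.of_apply, h1, h2]
      rw [if_neg (by omega)]
      have h3 : i.1 + 1 + j.1 - 1 = i.1 + j.1 := by omega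
      rw [h3]
      ring
  -- expand along column 0
  set N : Matrix (Fin m) (Fin m) ℤ := B.submatrix Fin.succ Fin.succ with hN
  have hBdet : B.det = N.det := by
    rw [Matrix.det_succ_column_zero]
    rw [Finset.sum_eq_single 0]
    · have h00 : B 0 0 = U 0 := by simp [hB]
      rw [h00, hUval 0 (by omega)]
      simp [hN, Fin.succAbove_zero]
    · intro i _ hi
      have hiv : (i : ℕ) ≠ 0 := fun h => hi (Fin.ext (by simp [h]))
      have hB0 : B i 0 = 0 := by
        simp only [hB, Matrix.of_apply, if_neg hiv]
        have : (0 : Fin (m+1)).1 = 0 := rfl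
        rw [this, Nat.add_zero]
        obtain ⟨k, hk⟩ : ∃ k, (i : ℕ) = k + 1 := ⟨(i : ℕ) - 1, by omega⟩
        rw [hk]
        simp only [Nat.add_sub_cancel]
        exact hV0 k (by have := i.2; omega)
      rw [hB0]; ring
    · simp
  -- N reversed is lower triangular
  set N' : Matrix (Fin m) (Fin m) ℤ := N.submatrix id Fin.revPerm with hN'
  have hNentry : ∀ a b : Fin m, N a b = U (a.1 + b.1 + 2) - 2 * U (a.1 + b.1 + 1) := by
    intro a b
    simp only [hN, Matrix.submatrix_apply, hB, Matrix.of_apply]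
    have h1 : (a.succ : ℕ) = a.1 + 1 := rfl
    have h2 : (b.succ : ℕ) = b.1 + 1 := rfl
    rw [h1, h2, if_neg (by omega)]
    have e2 : a.1 + 1 + (b.1 + 1) - 1 = a.1 + b.1 + 1 := by omega
    have e1 : a.1 + 1 + (b.1 + 1) = a.1 + b.1 + 2 := by omega
    rw [e2, e1]
  have hrev : ∀ b : Fin m, ((Fin.revPerm b : Fin m) : ℕ) = m - 1 - b.1 := by
    intro b
    simp [Fin.revPerm, Fin.rev]
    omega
  have htri : N'.BlockTriangular OrderDual.toDual := by
    intro a b hab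
    have hab' : a < b := hab
    have hbv : b.1 < m := b.2
    simp only [hN', Matrix.submatrix_apply, id_eq]
    rw [hNentry, hrev]
    have hx : a.1 + (m - 1 - b.1) + 2 = (a.1 + (m - 1 - b.1) + 1) + 1 := by omega
    rw [hx]
    exact hV0 _ (by have := Fin.lt_iff_val_lt_val.mp hab'; omega)
  have hdiag : ∀ a : Fin m, N' a a = -1 := by
    intro a
    simp only [hN', Matrix.submatrix_apply, id_eq]
    rw [hNentry, hrev]
    have h1 : a.1 + (m - 1 - a.1) + 2 = m + 1 := by have := a.2; omega
    have h2 : a.1 + (m - 1 - a.1) + 1 = m := by have := a.2; omega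
    rw [h1, h2]
    exact hVm
  have hN'det : N'.det = (-1) ^ m := by
    rw [Matrix.det_of_lowerTriangular N' htri]
    simp [hdiag]
  have hperm : N'.det = (Equiv.Perm.sign (Fin.revPerm : Equiv.Perm (Fin m)) : ℤ) * N.det :=
    Matrix.det_permute' Fin.revPerm N
  have key : A.det = N.det := hAB.trans hBdet
  rcases Int.units_eq_one_or (Equiv.Perm.sign (Fin.revPerm : Equiv.Perm (Fin m))) with hs | hs <;>
    rw [hs] at hperm <;>
    rcases neg_one_pow_eq_or ℤ m with hp | hp <;>
    rw [hp] at hN'det <;>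
    simp only [Units.val_one, Units.val_neg, one_mul, neg_mul] at hperm <;>
    rw [key] <;> omega
end

section
/- Let U be a linear numeration system of recurrence length k and let ℓ ≥ k := k_{U,m}. Then the number of ℓ-tuples b ∈ {0,…,m−1}^ℓ for which the system H_ℓ x ≡ b (mod m) has a solution equals the number of k-tuples b' ∈ {0,…,m−1}^k for which H_k x ≡ b' (mod m) has a solution (i.e., it equals S_{U,m}). -/
/-- Every shifted subsequence is a linear combination of the first `k` shifts. -/
private lemma exists_coef {m k : ℕ} (hk : 1 ≤ k) (U : ℕ → ZMod m) (a : Fin k → ZMod m)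
    (hrec : ∀ n, U (n + k) = ∑ i : Fin k, a i * U (n + i)) :
    ∀ n, ∃ z : Fin k → ZMod m, ∀ i, U (i + n) = ∑ t : Fin k, z t * U (i + t.1) := by
  intro n
  induction n using Nat.strong_induction_on with
  | _ n IH =>
    rcases lt_or_ge n k with hn | hn
    · refine ⟨fun t => if t = ⟨n, hn⟩ then 1 else 0, fun i => ?_⟩
      simp [ite_mul]
    · have IH' : ∀ s : Fin k, ∃ z : Fin k → ZMod m,
        ∀ i, U (i + (n - k + s.1)) = ∑ t : Fin k, z t * U (i + t.1) :=
        fun s => IH _ (by omega)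
      choose zs hzs using IH'
      refine ⟨fun t => ∑ s : Fin k, a s * zs s t, fun i => ?_⟩
      have h1 : i + n = (i + (n - k)) + k := by omega
      rw [h1, hrec]
      have h2 : ∀ s : Fin k, i + (n - k) + s.1 = i + (n - k + s.1) := fun s => by omega
      calc ∑ s : Fin k, a s * U (i + (n - k) + s.1)
          = ∑ s : Fin k, a s * ∑ t : Fin k, zs s t * U (i + t.1) := by
            refine Finset.sum_congr rfl fun s _ => ?_
            rw [h2 s, hzs s i]
        _ = ∑ t : Fin k, (∑ s : Fin k, a s * zs s t) * U (i + t.1) := by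
            simp_rw [Finset.mul_sum, Finset.sum_mul]
            rw [Finset.sum_comm]
            simp [mul_assoc]

/-- Rows beyond the `k`-th of the Hankel image satisfy the recurrence. -/
private lemma row_rec {m k ℓ : ℕ} (U : ℕ → ZMod m) (a : Fin k → ZMod m)
    (hrec : ∀ n, U (n + k) = ∑ i : Fin k, a i * U (n + i))
    (x : Fin ℓ → ZMod m) {n : ℕ} (hkn : k ≤ n) (hn : n < ℓ) :
    Matrix.mulVec (Matrix.of fun i j : Fin ℓ => U (i.1 + j.1)) x ⟨n, hn⟩ =
      ∑ i : Fin k, a i *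
        Matrix.mulVec (Matrix.of fun i j : Fin ℓ => U (i.1 + j.1)) x ⟨n - k + i.1, by omega⟩ := by
  simp only [Matrix.mulVec, dotProduct, Matrix.of_apply]
  simp_rw [Finset.mul_sum]
  rw [Finset.sum_comm]
  refine Finset.sum_congr rfl fun j _ => ?_
  have h1 : n + j.1 = (n - k + j.1) + k := by omega
  rw [h1, hrec, Finset.sum_mul]
  refine Finset.sum_congr rfl fun i _ => ?_
  have h2 : n - k + j.1 + i.1 = n - k + i.1 + j.1 := by omega
  rw [h2, mul_assoc]

theorem hankel_image_card_stable
    (m k ℓ : ℕ) (hm : 2 ≤ m) (hk : 1 ≤ k) (hkl : k ≤ ℓ)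
    (U : ℕ → ZMod m)
    (a : Fin k → ZMod m)
    (hrec : ∀ n, U (n + k) = ∑ i : Fin k, a i * U (n + i))
    (hmin : ∀ t < k, ¬ ∃ c : Fin t → ZMod m, ∀ n, U (n + t) = ∑ i : Fin t, c i * U (n + i)) :
    Nat.card (Set.range (Matrix.mulVec (Matrix.of fun i j : Fin ℓ => U (i.1 + j.1)))) =
    Nat.card (Set.range (Matrix.mulVec (Matrix.of fun i j : Fin k => U (i.1 + j.1)))) := by
  classical
  set A : Matrix (Fin ℓ) (Fin ℓ) (ZMod m) := Matrix.of fun i j : Fin ℓ => U (i.1 + j.1) with hA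
  set B : Matrix (Fin k) (Fin k) (ZMod m) := Matrix.of fun i j : Fin k => U (i.1 + j.1) with hB
  set trunc : (Fin ℓ → ZMod m) → (Fin k → ZMod m) :=
    fun y => fun i => y (Fin.castLE hkl i) with htrunc
  -- injectivity of truncation on the range of A.mulVec
  have hinj : Set.InjOn trunc (Set.range A.mulVec) := by
    rintro y1 ⟨x1, rfl⟩ y2 ⟨x2, rfl⟩ h
    funext r
    obtain ⟨n, hn⟩ := r
    induction n using Nat.strong_induction_on with
    | _ n IHn =>
      rcases lt_or_ge n k with hnk | hnk
      · have := congrFun h ⟨n, hnk⟩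
        simpa [htrunc, Fin.castLE] using this
      · rw [row_rec U a hrec x1 hnk hn, row_rec U a hrec x2 hnk hn]
        refine Finset.sum_congr rfl fun i _ => ?_
        rw [IHn (n - k + i.1) (by omega)]
  -- image of truncation equals range of B.mulVec
  have himg : trunc '' Set.range A.mulVec = Set.range B.mulVec := by
    apply Set.Subset.antisymm
    · rintro _ ⟨_, ⟨x, rfl⟩, rfl⟩
      have hz0 : ∀ j : Fin ℓ, ∃ z : Fin k → ZMod m,
          ∀ i, U (i + j.1) = ∑ t : Fin k, z t * U (i + t.1) :=
        fun j => exists_coef hk U a hrec j.1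
      choose z hz using hz0
      refine ⟨fun t => ∑ j : Fin ℓ, x j * z j t, ?_⟩
      funext i
      simp only [htrunc, Matrix.mulVec, dotProduct, Matrix.of_apply, hA, hB,
        Fin.castLE]
      calc ∑ t : Fin k, U (i.1 + t.1) * ∑ j : Fin ℓ, x j * z j t
          = ∑ j : Fin ℓ, (∑ t : Fin k, z j t * U (i.1 + t.1)) * x j := by
            simp_rw [Finset.mul_sum, Finset.sum_mul]
            rw [Finset.sum_comm]
            refine Finset.sum_congr rfl fun t _ => Finset.sum_congr rfl fun j _ => by ring
        _ = ∑ j : Fin ℓ, U (i.1 + j.1) * x j := by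
            refine Finset.sum_congr rfl fun j _ => ?_
            rw [← hz j i.1]
    · rintro _ ⟨x, rfl⟩
      refine ⟨A.mulVec (fun j => if h : j.1 < k then x ⟨j.1, h⟩ else 0), ⟨_, rfl⟩, ?_⟩
      funext i
      simp only [htrunc, Matrix.mulVec, dotProduct, Matrix.of_apply, hA, hB,
        Fin.castLE]
      set g : ℕ → ZMod m := fun n => if h : n < k then U (i.1 + n) * x ⟨n, h⟩ else 0 with hg
      have hL : ∀ j : Fin ℓ, (U (i.1 + j.1) * if h : j.1 < k then x ⟨j.1, h⟩ else 0) = g j.1 := by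
        intro j
        by_cases h : j.1 < k <;> simp [hg, h]
      have hR : ∀ j : Fin k, U (i.1 + j.1) * x j = g j.1 := by
        intro j
        simp [hg, j.2]
      simp only [hL, hR]
      rw [Fin.sum_univ_eq_sum_range g ℓ, Fin.sum_univ_eq_sum_range g k]
      exact (Finset.sum_subset (Finset.range_subset_range.mpr hkl)
        (fun n _ hn => dif_neg (by simpa using hn))).symm
  calc Nat.card (Set.range A.mulVec)
      = Nat.card (trunc '' Set.range A.mulVec) := (Nat.card_image_of_injOn hinj).symm
    _ = Nat.card (Set.range B.mulVec) := by rw [himg]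
end

section
/- Let L ⊆ A* be a language over a finite alphabet A and m ≥ 2. For any numeration system U (increasing, U_0 = 1, bounded ratio), the number of distinct left quotients w⁻¹(0* rep_U(mℕ)) for w ranging over prefixes of rep_U(m) is at least |rep_U(m)|; hence the minimal automaton of 0* rep_U(mℕ) has at least |rep_U(m)| states. -/
/-- Numerical value of a word of digits, most significant digit first:
the head digit multiplies `U` at the position given by the tail length. -/
def nval (U : ℕ → ℕ) : List ℕ → ℕ
  | [] => 0
  | d :: t => d * U t.length + nval U t

/-- A word (msd first) is greedy if every suffix `s` satisfies `nval s < U |s|`. -/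
def NGreedy (U : ℕ → ℕ) (w : List ℕ) : Prop :=
  ∀ s : List ℕ, s <:+ w → nval U s < U s.length

/-!
Let `n = |rep_U(m)|`. For `1 ≤ i < j ≤ n`, the suffix of `rep_U(m)` after its prefix of length `j`
separates the quotients by the prefixes of lengths `i` and `j`: appended to the longer prefix it
gives back `rep_U(m)`, while appended to the shorter one it gives a word that keeps the nonzero
leading digit but is shorter than `rep_U(m)`. If that word were greedy, its value would be positive
and smaller than `U (n - 1) ≤ m`, so it cannot be a multiple of `m`.
-/

open Set

namespace Language

variable {α : Type*}

theorem finite_setOf_leftQuotient_prefix (L : Language α) (w : List α) :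
    {S | ∃ p, p <+: w ∧ S = L.leftQuotient p}.Finite := by
  refine ((finite_Iic w.length).image fun i => L.leftQuotient (w.take i)).subset ?_
  rintro S ⟨p, hp, rfl⟩
  exact ⟨p.length, hp.length_le, congrArg L.leftQuotient (List.prefix_iff_eq_take.mp hp).symm⟩

theorem injOn_leftQuotient_take {L : Language α} {w : List α} (hw : w ∈ L)
    (hsep : ∀ i j, 1 ≤ i → i < j → j ≤ w.length → w.take i ++ w.drop j ∉ L) :
    InjOn (fun i => L.leftQuotient (w.take i)) (Icc 1 w.length) := by
  have hne : ∀ i j, 1 ≤ i → i < j → j ≤ w.length →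
      L.leftQuotient (w.take i) ≠ L.leftQuotient (w.take j) := by
    intro i j hi hij hj heq
    have hdrop : w.drop j ∈ L.leftQuotient (w.take j) := by
      rwa [mem_leftQuotient, List.take_append_drop]
    exact hsep i j hi hij hj (by rwa [← heq] at hdrop)
  intro i ⟨hi1, hin⟩ j ⟨hj1, hjn⟩ heq
  rcases lt_trichotomy i j with hij | hij | hij
  · exact absurd heq (hne i j hi1 hij hjn)
  · exact hij
  · exact absurd heq.symm (hne j i hj1 hij hin)

theorem length_le_ncard_setOf_leftQuotient_prefix (L : Language α) (w : List α)
    (hinj : InjOn (fun i => L.leftQuotient (w.take i)) (Icc 1 w.length)) :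
    w.length ≤ {S | ∃ p, p <+: w ∧ S = L.leftQuotient p}.ncard := by
  have himage : (fun i => L.leftQuotient (w.take i)) '' Icc 1 w.length ⊆
      {S | ∃ p, p <+: w ∧ S = L.leftQuotient p} := by
    rintro S ⟨i, -, rfl⟩
    exact ⟨w.take i, List.take_prefix i w, rfl⟩
  calc w.length = (Icc 1 w.length).ncard := by simp
    _ = ((fun i => L.leftQuotient (w.take i)) '' Icc 1 w.length).ncard :=
      hinj.ncard_image.symm
    _ ≤ _ := ncard_le_ncard himage (finite_setOf_leftQuotient_prefix L w)

end Language

section Numeration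

variable {U : ℕ → ℕ}

theorem NGreedy.nval_lt {w : List ℕ} (hw : NGreedy U w) : nval U w < U w.length :=
  hw w List.suffix_rfl

theorem le_nval_cons {a : ℕ} (ha : a ≠ 0) (t : List ℕ) : U t.length ≤ nval U (a :: t) := by
  have : U t.length ≤ a * U t.length := Nat.le_mul_of_pos_left _ (Nat.pos_of_ne_zero ha)
  simp only [nval]
  omega

theorem nval_pos (hU : Monotone U) (h0 : 0 < U 0) {w : List ℕ} (hw : w.headI ≠ 0) :
    0 < nval U w := by
  cases w with
  | nil => exact absurd rfl hw
  | cons a t => exact (h0.trans_le (hU (Nat.zero_le _))).trans_le (le_nval_cons hw t)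

theorem nval_lt_nval_of_length_lt (hU : Monotone U) {w v : List ℕ} (hw : NGreedy U w)
    (hv : v.headI ≠ 0) (hlt : w.length < v.length) : nval U w < nval U v := by
  cases v with
  | nil => exact absurd hlt (Nat.not_lt_zero _)
  | cons a t =>
    calc nval U w < U w.length := hw.nval_lt
      _ ≤ U t.length := hU (Nat.le_of_lt_succ hlt)
      _ ≤ nval U (a :: t) := le_nval_cons hv t

theorem headI_take_append_drop {w : List ℕ} {i : ℕ} (hi : 1 ≤ i) (j : ℕ) :
    (w.take i ++ w.drop j).headI = w.headI := by
  obtain ⟨i, rfl⟩ := Nat.exists_eq_add_of_le' hi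
  cases w <;> simp

theorem not_dvd_nval_take_append_drop (hU : Monotone U) (h0 : 0 < U 0) {rep : List ℕ}
    (hlead : rep.headI ≠ 0) {i j : ℕ} (hi : 1 ≤ i) (hij : i < j) (hj : j ≤ rep.length)
    (hg : NGreedy U (rep.take i ++ rep.drop j)) :
    ¬ nval U rep ∣ nval U (rep.take i ++ rep.drop j) := by
  have hhead : (rep.take i ++ rep.drop j).headI ≠ 0 := by
    rwa [headI_take_append_drop hi]
  have hlen : (rep.take i ++ rep.drop j).length < rep.length := by
    simp only [List.length_append, List.length_take, List.length_drop]
    omega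
  exact Nat.not_dvd_of_pos_of_lt (nval_pos hU h0 hhead)
    (nval_lt_nval_of_length_lt hU hg hlead hlen)

end Numeration

theorem quotients_lower_bound_general
    (U : ℕ → ℕ) (hU : StrictMono U) (h0 : U 0 = 1)
    (m : ℕ)
    (rep : List ℕ) (hg : NGreedy U rep) (hval : nval U rep = m)
    (hlead : rep.headI ≠ 0) :
    rep.length ≤ Set.ncard
      {S : Set (List ℕ) | ∃ p, p <+: rep ∧
        S = {x | NGreedy U (p ++ x) ∧ m ∣ nval U (p ++ x)}} := by
  let L : Language ℕ := {w | NGreedy U w ∧ m ∣ nval U w}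
  have hsep : ∀ i j, 1 ≤ i → i < j → j ≤ rep.length → rep.take i ++ rep.drop j ∉ L :=
    fun i j hi hij hj ⟨hgreedy, hdvd⟩ =>
      not_dvd_nval_take_append_drop hU.monotone (h0 ▸ Nat.one_pos) hlead hi hij hj hgreedy
        (hval ▸ hdvd)
  exact L.length_le_ncard_setOf_leftQuotient_prefix rep
    (L.injOn_leftQuotient_take ⟨hg, hval ▸ dvd_rfl⟩ hsep)

theorem quotients_lower_bound
    (U : ℕ → ℕ) (hU : StrictMono U) (h0 : U 0 = 1)
    (C : ℕ) (hC : ∀ n, U (n + 1) ≤ C * U n)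
    (m : ℕ) (hm : 2 ≤ m)
    (rep : List ℕ) (hg : NGreedy U rep) (hval : nval U rep = m)
    (hne : rep ≠ []) (hlead : rep.headI ≠ 0) :
    rep.length ≤ Set.ncard
      {S : Set (List ℕ) | ∃ p, p <+: rep ∧
        S = {x | NGreedy U (p ++ x) ∧ m ∣ nval U (p ++ x)}} :=
  quotients_lower_bound_general U hU h0 m rep hg hval hlead
end

section
/- For the Fibonacci numeration system, appending a 0 preserves greediness: a word w over {0,1} is a greedy representation if and only if w0 is a greedy representation (Bertrand property). -/
lemma Upos (U : ℕ → ℕ) (h0 : U 0 = 1) (h1 : U 1 = 2)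
    (hrec : ∀ n, U (n + 2) = U (n + 1) + U n) : ∀ n, 0 < U n
  | 0 => by omega
  | 1 => by omega
  | n + 2 => by have := Upos U h0 h1 hrec n; have := hrec n; omega

lemma lemA (U : ℕ → ℕ) (h0 : U 0 = 1) (h1 : U 1 = 2)
    (hrec : ∀ n, U (n + 2) = U (n + 1) + U n) :
    ∀ n (w : List ℕ), w.length ≤ n → (∀ d ∈ w, d ≤ 1) → NGreedy U w →
      nval (fun k => U (k + 1)) w < U (w.length + 1) := by
  intro n
  induction n with
  | zero =>
      intro w hl _ _
      have : w = [] := List.eq_nil_of_length_eq_zero (Nat.le_zero.mp hl)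
      subst this; simpa [nval] using by omega
  | succ n ih =>
      intro w hl hdig hg
      match w with
      | [] => simpa [nval] using by omega
      | d :: t =>
          have hd : d ≤ 1 := hdig d (by simp)
          have htdig : ∀ e ∈ t, e ≤ 1 := fun e he => hdig e (by simp [he])
          have htg : NGreedy U t := fun s hs => hg s (hs.trans (List.suffix_cons d t))
          simp only [List.length_cons] at hl
          have iht := ih t (by omega) htdig htg
          simp only [nval, List.length_cons]
          interval_cases d
          · have hpos := Upos U h0 h1 hrec t.length
            have := hrec t.length
            have e1 : U (t.length + 1 + 1) = U (t.length + 2) := rfl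
            omega
          · -- d = 1
            have hw := hg (1 :: t) (List.suffix_refl _)
            simp only [nval, List.length_cons] at hw
            have key : nval (fun k => U (k + 1)) t < U t.length := by
              match t with
              | [] => simpa [nval] using by omega
              | d' :: t' =>
                  have hd' : d' ≤ 1 := htdig d' (by simp)
                  simp only [nval, List.length_cons] at hw ⊢
                  have hrec' := hrec t'.length
                  have hpos := Upos U h0 h1 hrec t'.length
                  have hd'0 : d' = 0 := by
                    rcases Nat.le_one_iff_eq_zero_or_eq_one.mp hd' with h | h
                    · exact h
                    · exfalso; subst h
                      have e1 : U (t'.length + 1 + 1) = U (t'.length + 2) := rfl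
                      omega
                  subst hd'0
                  have ht'dig : ∀ e ∈ t', e ≤ 1 := fun e he => htdig e (by simp [he])
                  have ht'g : NGreedy U t' := fun s hs =>
                    htg s (hs.trans (List.suffix_cons 0 t'))
                  simp only [List.length_cons] at hl
                  have iht' := ih t' (by omega) ht'dig ht'g
                  simpa using iht'
            have := hrec t.length
            have e1 : U (t.length + 1 + 1) = U (t.length + 2) := rfl
            have e2 : U (t.length + 1 + 2) = U (t.length + 3) := rfl
            have e3 : U (t.length + 2 + 1) = U (t.length + 3) := rfl
            omega
lemma nval_append_zero (U : ℕ → ℕ) : ∀ s : List ℕ,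
    nval U (s ++ [0]) = nval (fun n => U (n + 1)) s
  | [] => by simp [nval]
  | d :: t => by simp [nval, nval_append_zero U t]

lemma Umono (U : ℕ → ℕ) (h0 : U 0 = 1) (h1 : U 1 = 2)
    (hrec : ∀ n, U (n + 2) = U (n + 1) + U n) : ∀ n, U n ≤ U (n + 1)
  | 0 => by have e : U (0 + 1) = U 1 := rfl; omega
  | n + 1 => by
      have := Upos U h0 h1 hrec n
      have := hrec n
      have e : U (n + 1 + 1) = U (n + 2) := rfl
      omega

lemma lemC (U : ℕ → ℕ) (h0 : U 0 = 1) (h1 : U 1 = 2)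
    (hrec : ∀ n, U (n + 2) = U (n + 1) + U n) :
    ∀ n (w : List ℕ), w.length ≤ n → (∀ d ∈ w, d ≤ 1) →
      (∀ s : List ℕ, s <:+ w → nval (fun k => U (k + 1)) s < U (s.length + 1)) →
      nval U w < U w.length := by
  intro n
  induction n with
  | zero =>
      intro w hl _ _
      have : w = [] := List.eq_nil_of_length_eq_zero (Nat.le_zero.mp hl)
      subst this; simpa [nval] using by omega
  | succ n ih =>
      intro w hl hdig hH
      match w with
      | [] => simpa [nval] using by omega
      | d :: t =>
          have hd : d ≤ 1 := hdig d (by simp)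
          have htdig : ∀ e ∈ t, e ≤ 1 := fun e he => hdig e (by simp [he])
          have htH : ∀ s : List ℕ, s <:+ t → nval (fun k => U (k + 1)) s < U (s.length + 1) :=
            fun s hs => hH s (hs.trans (List.suffix_cons d t))
          simp only [List.length_cons] at hl
          have iht := ih t (by omega) htdig htH
          simp only [nval, List.length_cons]
          interval_cases d
          · have := Umono U h0 h1 hrec t.length
            omega
          · -- d = 1
            have hw := hH (1 :: t) (List.suffix_refl _)
            simp only [nval, List.length_cons] at hw
            have hrec1 := hrec t.length
            have e1 : U (t.length + 1 + 1) = U (t.length + 2) := rfl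
            have hshift : nval (fun k => U (k + 1)) t < U t.length := by omega
            match t with
            | [] => simpa [nval] using by omega
            | d' :: t' =>
                have hd' : d' ≤ 1 := htdig d' (by simp)
                simp only [nval, List.length_cons] at hshift hw ⊢
                have hpos := Upos U h0 h1 hrec (t'.length + 1)
                have hd'0 : d' = 0 := by
                  rcases Nat.le_one_iff_eq_zero_or_eq_one.mp hd' with h | h
                  · exact h
                  · exfalso; subst h
                    have := Upos U h0 h1 hrec t'.length
                    omega
                subst hd'0
                have ht'dig : ∀ e ∈ t', e ≤ 1 := fun e he => htdig e (by simp [he])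
                have ht'H : ∀ s : List ℕ, s <:+ t' →
                    nval (fun k => U (k + 1)) s < U (s.length + 1) :=
                  fun s hs => htH s (hs.trans (List.suffix_cons 0 t'))
                simp only [List.length_cons] at hl
                have iht' := ih t' (by omega) ht'dig ht'H
                have := hrec (t'.length + 1)
                have e2 : U (t'.length + 1 + 1) = U (t'.length + 2) := rfl
                have e3 : U (t'.length + 1 + 2) = U (t'.length + 3) := rfl
                have e4 : U (t'.length + 2 + 1) = U (t'.length + 3) := rfl
                have e5 : U (t'.length + 1 + 1 + 1) = U (t'.length + 3) := rfl
                have b1 : nval U (0 :: t') = nval U t' := by simp [nval]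
                have b2 : U ((0 :: t').length + 1) = U (t'.length + 2) := rfl
                have b3 : U ((0 :: t').length + 1 + 1) = U (t'.length + 3) := rfl
                have b4 : U ((0 :: t').length) = U (t'.length + 1) := rfl
                have := hrec t'.length
                omega

theorem fibonacci_bertrand
    (U : ℕ → ℕ) (h0 : U 0 = 1) (h1 : U 1 = 2)
    (hrec : ∀ n, U (n + 2) = U (n + 1) + U n)
    (w : List ℕ) (hw : ∀ d ∈ w, d ≤ 1) :
    NGreedy U w ↔ NGreedy U (w ++ [0]) := by
  constructor
  · intro hg s hs
    rcases List.eq_nil_or_concat s with rfl | ⟨s', a, rfl⟩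
    · simpa [nval] using by omega
    · rw [List.concat_eq_append] at hs ⊢
      obtain ⟨p, hp⟩ := hs
      have hps : (p ++ s') ++ [a] = w ++ [0] := by
        simpa [List.append_assoc] using hp
      have ha : a = 0 := by
        have := congrArg List.getLast? hps
        simpa using this
      have hpw : p ++ s' = w := by
        have := congrArg List.dropLast hps
        simpa using this
      subst ha
      have hs' : s' <:+ w := ⟨p, hpw⟩
      have hdig : ∀ d ∈ s', d ≤ 1 := fun d hd => hw d (hs'.subset hd)
      have hgs : NGreedy U s' := fun t ht => hg t (ht.trans hs')
      have := lemA U h0 h1 hrec s'.length s' le_rfl hdig hgs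
      rw [nval_append_zero]
      simpa using this
  · intro hg s hs
    have hdig : ∀ d ∈ s, d ≤ 1 := fun d hd => hw d (hs.subset hd)
    refine lemC U h0 h1 hrec s.length s le_rfl hdig ?_
    intro t ht
    have htw : t ++ [0] <:+ w ++ [0] := by
      obtain ⟨p, hp⟩ := ht.trans hs
      exact ⟨p, by rw [← List.append_assoc, hp]⟩
    have := hg (t ++ [0]) htw
    rw [nval_append_zero] at this
    simpa using this
end

section
/- For the ℓ-bonacci numeration system, a word w over {0,1} is greedy if and only if it contains no factor 1^ℓ (i.e., no ℓ consecutive digits equal to 1). -/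
lemma pow_sum_lt (m j : ℕ) : ∑ i ∈ Finset.range j, 2 ^ (m + i) < 2 ^ (m + j) := by
  induction j with
  | zero => simp
  | succ j ih =>
    rw [Finset.sum_range_succ]
    have h2 : m + (j + 1) = (m + j) + 1 := by omega
    rw [h2, pow_succ]
    omega

lemma nval_replicate (U : ℕ → ℕ) : ∀ (k : ℕ) (r : List ℕ),
    nval U (List.replicate k 1 ++ r) = (∑ i ∈ Finset.range k, U (r.length + i)) + nval U r := by
  intro k
  induction k with
  | zero => simp
  | succ k ih =>
    intro r
    rw [List.replicate_succ, List.cons_append]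
    have : nval U (1 :: (List.replicate k 1 ++ r))
        = 1 * U ((List.replicate k 1 ++ r).length) + nval U (List.replicate k 1 ++ r) := rfl
    rw [this, ih r, Finset.sum_range_succ]
    simp only [List.length_append, List.length_replicate, one_mul]
    have : k + r.length = r.length + k := by omega
    rw [this]
    ring

lemma split01 : ∀ s : List ℕ, (∀ d ∈ s, d ≤ 1) →
    ∃ k r, s = List.replicate k 1 ++ r ∧ (r = [] ∨ ∃ t, r = 0 :: t) := by
  intro s
  induction s with
  | nil => exact fun _ => ⟨0, [], rfl, Or.inl rfl⟩
  | cons d t ih =>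
    intro h
    have hd : d ≤ 1 := h d (by simp)
    rcases Nat.le_one_iff_eq_zero_or_eq_one.mp hd with rfl | rfl
    · exact ⟨0, 0 :: t, rfl, Or.inr ⟨t, rfl⟩⟩
    · obtain ⟨k, r, hs, hr⟩ := ih (fun d hd => h d (by simp [hd]))
      exact ⟨k + 1, r, by rw [List.replicate_succ, List.cons_append, ← hs], hr⟩

section Aux

variable (ℓ : ℕ) (hℓ : 2 ≤ ℓ) (U : ℕ → ℕ)
  (hinit : ∀ i < ℓ, U i = 2 ^ i)
  (hrec : ∀ n, U (n + ℓ) = ∑ i ∈ Finset.range ℓ, U (n + i))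

include hℓ hinit hrec

omit hℓ in
lemma sum_consec_le (m j : ℕ) (hj : j ≤ ℓ) :
    ∑ i ∈ Finset.range j, U (m + i) ≤ U (m + j) := by
  by_cases h : m + j < ℓ
  · have h1 : ∀ i ∈ Finset.range j, U (m + i) = 2 ^ (m + i) := by
      intro i hi
      exact hinit _ (by simp only [Finset.mem_range] at hi; omega)
    rw [Finset.sum_congr rfl h1, hinit (m + j) h]
    exact (pow_sum_lt m j).le
  · have hnl : (m + j - ℓ) + ℓ = m + j := by omega
    have key : ∑ i ∈ Finset.Ico (ℓ - j) ℓ, U ((m + j - ℓ) + i)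
        = ∑ i ∈ Finset.range j, U (m + i) := by
      rw [Finset.sum_Ico_eq_sum_range]
      have hj' : ℓ - (ℓ - j) = j := by omega
      rw [hj']
      exact Finset.sum_congr rfl fun i _ => by congr 1; omega
    calc ∑ i ∈ Finset.range j, U (m + i)
        = ∑ i ∈ Finset.Ico (ℓ - j) ℓ, U ((m + j - ℓ) + i) := key.symm
      _ ≤ ∑ i ∈ Finset.range ℓ, U ((m + j - ℓ) + i) := by
          apply Finset.sum_le_sum_of_subset
          intro x hx
          simp only [Finset.mem_Ico] at hx
          simp only [Finset.mem_range]
          omega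
      _ = U ((m + j - ℓ) + ℓ) := (hrec _).symm
      _ = U (m + j) := by rw [hnl]

lemma key_lemma : ∀ n (s : List ℕ), s.length ≤ n → (∀ d ∈ s, d ≤ 1) →
    ¬ (List.replicate ℓ 1 <:+: s) → nval U s < U s.length := by
  intro n
  induction n with
  | zero =>
    intro s hs _ _
    have hnil : s = [] := List.length_eq_zero_iff.mp (Nat.le_zero.mp hs)
    subst hnil
    simp [nval, hinit 0 (by omega)]
  | succ n ih =>
    intro s hslen hdig hninf
    obtain ⟨k, r, rfl, hr⟩ := split01 s hdig
    have hkℓ : k < ℓ := by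
      by_contra hk
      apply hninf
      have hrep : List.replicate k 1 = List.replicate ℓ 1 ++ List.replicate (k - ℓ) (1 : ℕ) := by
        rw [← List.replicate_add]; congr 1; omega
      refine ⟨[], List.replicate (k - ℓ) 1 ++ r, ?_⟩
      rw [List.nil_append, hrep, List.append_assoc]
    rcases hr with rfl | ⟨t, rfl⟩
    · -- s = replicate k 1 ++ []
      rw [nval_replicate]
      have h1 : ∀ i ∈ Finset.range k, U (([] : List ℕ).length + i) = 2 ^ (0 + i) := by
        intro i hi
        simp only [Finset.mem_range] at hi
        simp only [List.length_nil]
        exact hinit _ (by omega)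
      rw [Finset.sum_congr rfl h1]
      have hL : (List.replicate k 1 ++ ([] : List ℕ)).length = k := by simp
      rw [hL, hinit k hkℓ]
      have := pow_sum_lt 0 k
      simp only [Nat.zero_add] at this ⊢
      simpa [nval] using this
    · -- s = replicate k 1 ++ 0 :: t
      have hdig' : ∀ d ∈ t, d ≤ 1 := fun d hd => hdig d (by simp [hd])
      have hninf' : ¬ (List.replicate ℓ 1 <:+: t) := by
        intro h
        exact hninf (h.trans ⟨List.replicate k 1 ++ [0], [], by simp⟩)
      have hlen' : t.length ≤ n := by
        simp only [List.length_append, List.length_replicate, List.length_cons] at hslen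
        omega
      have iht := ih t hlen' hdig' hninf'
      rw [nval_replicate]
      have hnr : nval U (0 :: t) = nval U t := by simp [nval]
      rw [hnr]
      simp only [List.length_cons]
      have hsum : ∑ i ∈ Finset.range (k + 1), U (t.length + i)
          = (∑ i ∈ Finset.range k, U (t.length + 1 + i)) + U t.length := by
        rw [Finset.sum_range_succ']
        simp only [Nat.add_zero]
        congr 1
        exact Finset.sum_congr rfl fun i _ => by congr 1; omega
      have hle : ∑ i ∈ Finset.range (k + 1), U (t.length + i) ≤ U (t.length + (k + 1)) :=
        sum_consec_le ℓ U hinit hrec t.length (k + 1) (by omega)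
      have hL : (List.replicate k 1 ++ 0 :: t).length = t.length + (k + 1) := by
        simp only [List.length_append, List.length_replicate, List.length_cons]; omega
      rw [hL]
      omega

end Aux

theorem lbonacci_greedy_iff_no_ones_block
    (ℓ : ℕ) (hℓ : 2 ≤ ℓ) (U : ℕ → ℕ)
    (hinit : ∀ i < ℓ, U i = 2 ^ i)
    (hrec : ∀ n, U (n + ℓ) = ∑ i ∈ Finset.range ℓ, U (n + i))
    (w : List ℕ) (hw : ∀ d ∈ w, d ≤ 1) :
    NGreedy U w ↔ ¬ (List.replicate ℓ 1 <:+: w) := by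
  constructor
  · intro hg hinf
    obtain ⟨p, q, hpq⟩ := hinf
    have hsuf : List.replicate ℓ 1 ++ q <:+ w := ⟨p, by rw [← hpq, List.append_assoc]⟩
    have h1 := hg _ hsuf
    rw [nval_replicate] at h1
    have h2 : ∑ i ∈ Finset.range ℓ, U (q.length + i) = U (q.length + ℓ) := (hrec q.length).symm
    have hL : (List.replicate ℓ 1 ++ q).length = q.length + ℓ := by simp; omega
    rw [hL, h2] at h1
    omega
  · intro hninf s hs
    exact key_lemma ℓ hℓ U hinit hrec s.length s le_rfl
      (fun d hd => hw d (hs.subset hd))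
      (fun h => hninf (h.trans hs.isInfix))
end

section
/- For the Fibonacci numeration system and any m ≥ 2, if two words u, v over {0,1} satisfy val_U(u) ≡ val_U(v) (mod m) and val_U(u0) ≡ val_U(v0) (mod m), then for every word x such that both ux and vx are greedy, val_U(ux) ≡ val_U(vx) (mod m). -/
lemma nval_replicate_zero (U : ℕ → ℕ) (n : ℕ) :
    nval U (List.replicate n 0) = 0 := by
  induction n with
  | zero => rfl
  | succ k ih => simp [List.replicate_succ, nval, ih]

lemma nval_append_split (U : ℕ → ℕ) (w x : List ℕ) :
    nval U (w ++ x) = nval U (w ++ List.replicate x.length 0) + nval U x := by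
  induction w with
  | nil => simp [nval, nval_replicate_zero]
  | cons d t ih =>
      simp only [List.cons_append, nval, List.append_eq, List.length_append, List.length_replicate, ih]
      ring

lemma nval_rep_rec (U : ℕ → ℕ) (hrec : ∀ n, U (n + 2) = U (n + 1) + U n)
    (w : List ℕ) (n : ℕ) :
    nval U (w ++ List.replicate (n + 2) 0) =
      nval U (w ++ List.replicate (n + 1) 0) + nval U (w ++ List.replicate n 0) := by
  induction w with
  | nil => simp [nval_replicate_zero]
  | cons d t ih =>
      simp only [List.cons_append, nval, List.append_eq, List.length_append, List.length_replicate, ih]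
      rw [show t.length + (n + 2) = (t.length + n) + 2 by ring, hrec]
      ring_nf

theorem fibonacci_congruence_extends
    (U : ℕ → ℕ) (h0 : U 0 = 1) (h1 : U 1 = 2)
    (hrec : ∀ n, U (n + 2) = U (n + 1) + U n)
    (m : ℕ) (hm : 2 ≤ m)
    (u v x : List ℕ)
    (hu : ∀ d ∈ u, d ≤ 1) (hv : ∀ d ∈ v, d ≤ 1) (hx : ∀ d ∈ x, d ≤ 1)
    (hc0 : nval U u ≡ nval U v [MOD m])
    (hc1 : nval U (u ++ [0]) ≡ nval U (v ++ [0]) [MOD m])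
    (hux : NGreedy U (u ++ x)) (hvx : NGreedy U (v ++ x)) :
    nval U (u ++ x) ≡ nval U (v ++ x) [MOD m] := by
  have key : ∀ n, nval U (u ++ List.replicate n 0) ≡ nval U (v ++ List.replicate n 0) [MOD m] := by
    intro n
    induction n using Nat.twoStepInduction with
    | zero => simpa using hc0
    | one => simpa using hc1
    | more k ih1 ih2 =>
        rw [nval_rep_rec U hrec u k, nval_rep_rec U hrec v k]
        exact (ih2.add ih1)
  rw [nval_append_split U u x, nval_append_split U v x]
  exact (key x.length).add_right _
end
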